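/- (Macdonald's polynomial relation, derived from the Dehn–Sommerville relation.) Let Δ be a reciprocal simplicial complex of dimension d−1. Set f^∂_{−1} := 1 and f^∂_{i−1} := f_{i−1} − f^int_{i−1} for 1 ≤ i ≤ d, and define Q(x) := ∑_{i=0}^d (−1)^i f_{i−1} x^i − (1/2) ∑_{i=0}^d (−1)^i f^∂_{i−1} x^i in ℚ[x]. Then (−1)^d Q(−x) = Q(1+x) + c, where c = 0 if d is even and c = χ̃(Δ) if d is odd. -/
import Mathlib


open Polynomial Finset


/-- A (finite, abstract) simplicial complex: a finite collection of finite subsets of `V`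
containing the empty set and closed under taking subsets. -/
def IsSimplicialComplex {V : Type*} [DecidableEq V] (Δ : Finset (Finset V)) : Prop :=
  ∅ ∈ Δ ∧ ∀ F ∈ Δ, ∀ G ⊆ F, G ∈ Δ

/-- `Δ` has dimension `d - 1`: every face has at most `d` elements and some face has
exactly `d` elements. -/
def HasDimension {V : Type*} [DecidableEq V] (Δ : Finset (Finset V)) (d : ℕ) : Prop :=
  (∀ F ∈ Δ, F.card ≤ d) ∧ ∃ F ∈ Δ, F.card = d

/-- `fnum Δ i` is the number of faces of `Δ` with exactly `i` elements, i.e. `f_{i-1}`. -/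
def fnum {V : Type*} [DecidableEq V] (Δ : Finset (Finset V)) (i : ℕ) : ℕ :=
  (Δ.filter fun F => F.card = i).card

/-- The multiplicity `m_F = ∑_{G ∈ Δ, F ⊆ G} (−1)^{d−|G|}` of a face `F` of a complex of
dimension `d − 1` (all faces `G` satisfy `|G| ≤ d`, so `d - G.card` is the usual subtraction). -/
def mult {V : Type*} [DecidableEq V] (Δ : Finset (Finset V)) (d : ℕ) (F : Finset V) : ℤ :=
  ∑ G ∈ Δ.filter (fun G => F ⊆ G), (-1 : ℤ) ^ (d - G.card)

/-- The reduced Euler characteristic `χ̃(Γ) = ∑_{G ∈ Γ} (−1)^{|G|−1}`; the exponent is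
written `|G| + 1`, which has the same parity as `|G| − 1` (the empty face contributes `−1`). -/
def chiTilde {V : Type*} [DecidableEq V] (Γ : Finset (Finset V)) : ℤ :=
  ∑ G ∈ Γ, (-1 : ℤ) ^ (G.card + 1)

/-- The link of a face `F` in `Δ`. -/
def link {V : Type*} [DecidableEq V] (Δ : Finset (Finset V)) (F : Finset V) :
    Finset (Finset V) :=
  Δ.filter fun G => G ∩ F = ∅ ∧ G ∪ F ∈ Δ

/-- `Δ` (of dimension `d − 1`) is reciprocal if `m_F ∈ {0, 1}` for every nonempty face. -/
def IsReciprocal {V : Type*} [DecidableEq V] (Δ : Finset (Finset V)) (d : ℕ) : Prop :=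
  ∀ F ∈ Δ, F ≠ ∅ → mult Δ d F = 0 ∨ mult Δ d F = 1

/-- `Δ` (of dimension `d − 1`) is semi-Eulerian if `m_F = 1` for every nonempty face. -/
def IsSemiEulerian {V : Type*} [DecidableEq V] (Δ : Finset (Finset V)) (d : ℕ) : Prop :=
  ∀ F ∈ Δ, F ≠ ∅ → mult Δ d F = 1

/-- `fint Δ d i` is the number of interior faces (nonempty faces with `m_F = 1`) of `Δ`
with exactly `i` elements, i.e. `f^int_{i-1}`. -/
def fint {V : Type*} [DecidableEq V] (Δ : Finset (Finset V)) (d : ℕ) (i : ℕ) : ℕ :=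
  (Δ.filter fun F => F.card = i ∧ F ≠ ∅ ∧ mult Δ d F = 1).card

/-- `f^∂_{i−1}` as a rational number: `f^∂_{−1} = 1` and
`f^∂_{i−1} = f_{i−1} − f^int_{i−1}` for `i ≥ 1`. -/
def fpartial {V : Type*} [DecidableEq V] (Δ : Finset (Finset V)) (d : ℕ) (i : ℕ) : ℚ :=
  if i = 0 then 1 else (fnum Δ i : ℚ) - (fint Δ d i : ℚ)

/-- Macdonald's polynomial
`Q(x) = ∑_{i=0}^d (−1)^i f_{i−1} x^i − (1/2) ∑_{i=0}^d (−1)^i f^∂_{i−1} x^i ∈ ℚ[x]`. -/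
noncomputable def Qpoly {V : Type*} [DecidableEq V] (Δ : Finset (Finset V)) (d : ℕ) :
    Polynomial ℚ :=
  (∑ i ∈ range (d + 1), C ((-1 : ℚ) ^ i * (fnum Δ i : ℚ)) * X ^ i)
    - C (1 / 2 : ℚ) * ∑ i ∈ range (d + 1), C ((-1 : ℚ) ^ i * fpartial Δ d i) * X ^ i

section Aux
variable {V : Type*} [DecidableEq V] (Δ : Finset (Finset V)) (d : ℕ)

lemma sum_card_group (hdim : ∀ F ∈ Δ, F.card ≤ d) (h : ℕ → ℚ) :
    ∑ G ∈ Δ, h G.card = ∑ i ∈ Finset.range (d+1), (fnum Δ i : ℚ) * h i := by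
  rw [← Finset.sum_fiberwise_of_maps_to' (g := Finset.card) (t := Finset.range (d+1))
      (fun G hG => by simp [Nat.lt_succ_iff, hdim G hG]) h]
  refine Finset.sum_congr rfl fun i _ => ?_
  rw [Finset.sum_const, fnum, nsmul_eq_mul]

lemma fint_eq (hΔ : IsSimplicialComplex Δ) (hrec : IsReciprocal Δ d) (i : ℕ) (hi : 1 ≤ i) :
    (fint Δ d i : ℤ) = ∑ G ∈ Δ, (-1 : ℤ)^(d - G.card) * (G.card.choose i) := by
  have h1 : ∑ F ∈ Δ.filter (fun F => F.card = i), mult Δ d F = (fint Δ d i : ℤ) := by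
    rw [← Finset.sum_filter_add_sum_filter_not _ (fun F => mult Δ d F = 1)]
    have h2 : ∀ F ∈ (Δ.filter fun F => F.card = i).filter (fun F => ¬ mult Δ d F = 1),
        mult Δ d F = 0 := by
      intro F hF
      simp only [Finset.mem_filter] at hF
      have hne : F ≠ ∅ := by
        rintro rfl; rw [Finset.card_empty] at hF; omega
      rcases hrec F hF.1.1 hne with h | h
      · exact h
      · exact absurd h hF.2
    rw [Finset.sum_congr rfl h2, Finset.sum_const_zero, add_zero,
        Finset.sum_congr rfl (fun F hF => (Finset.mem_filter.mp hF).2),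
        Finset.sum_const, Finset.filter_filter]
    have hset : (Δ.filter fun F => F.card = i ∧ mult Δ d F = 1)
        = Δ.filter fun F => F.card = i ∧ F ≠ ∅ ∧ mult Δ d F = 1 := by
      refine Finset.filter_congr fun F hF => ?_
      constructor
      · rintro ⟨h1, h2⟩
        exact ⟨h1, fun he => by rw [he, Finset.card_empty] at h1; omega, h2⟩
      · rintro ⟨h1, _, h2⟩; exact ⟨h1, h2⟩
    rw [hset, fint, nsmul_eq_mul, mul_one]
  rw [← h1]
  unfold mult
  rw [Finset.sum_comm'
    (s' := fun G => G.powersetCard i) (t' := Δ)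
    (h := by
      intro F G
      simp only [Finset.mem_filter, Finset.mem_powersetCard]
      constructor
      · rintro ⟨⟨hF, hc⟩, hG, hsub⟩; exact ⟨⟨hsub, hc⟩, hG⟩
      · rintro ⟨⟨hsub, hc⟩, hG⟩; exact ⟨⟨hΔ.2 G hG F hsub, hc⟩, hG, hsub⟩)]
  refine Finset.sum_congr rfl fun G _ => ?_
  rw [Finset.sum_const, Finset.card_powersetCard, nsmul_eq_mul, mul_comm]


variable {V : Type*} [DecidableEq V] (Δ : Finset (Finset V)) (d : ℕ)



lemma neg_one_pow_sub_q (d j : ℕ) (hj : j ≤ d) : ((-1:ℚ))^(d-j) = (-1)^d * (-1)^j := by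
  have h2 : ((-1:ℚ))^j * (-1)^j = 1 := by
    rw [← pow_add]; exact Even.neg_one_pow ⟨j, rfl⟩
  have h : ((-1:ℚ))^(d-j) * (-1)^j = (-1)^d := by
    rw [← pow_add, Nat.sub_add_cancel hj]
  calc ((-1:ℚ))^(d-j) = (-1)^(d-j) * ((-1)^j * (-1)^j) := by rw [h2, mul_one]
    _ = ((-1)^(d-j) * (-1)^j) * (-1)^j := by ring
    _ = (-1)^d * (-1)^j := by rw [h]

lemma binom_q (d j : ℕ) (hj : j ≤ d) (y : ℚ) :
    ∑ i ∈ Finset.range (d+1), (j.choose i : ℚ) * (-y)^i = (1-y)^j := by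
  rw [← Finset.sum_subset (Finset.range_subset_range.mpr (by omega : j+1 ≤ d+1))
      (fun i hi hni => by
        simp only [Finset.mem_range] at hi hni
        rw [Nat.choose_eq_zero_of_lt (by omega), Nat.cast_zero, zero_mul])]
  rw [show (1-y:ℚ) = (-y) + 1 by ring, add_pow]
  exact Finset.sum_congr rfl fun i _ => by rw [one_pow]; ring

lemma fint_zero : fint Δ d 0 = 0 := by
  rw [fint, Finset.card_eq_zero]
  refine Finset.filter_false_of_mem (fun F hF => ?_)
  rintro ⟨hc, hne, -⟩
  exact hne (Finset.card_eq_zero.mp hc)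

lemma fnum_zero (h0 : ∅ ∈ Δ) : fnum Δ 0 = 1 := by
  rw [fnum]
  have : Δ.filter (fun F => F.card = 0) = {∅} := by
    ext F
    simp only [Finset.mem_filter, Finset.card_eq_zero, Finset.mem_singleton]
    exact ⟨fun h => h.2, fun h => ⟨h ▸ h0, h⟩⟩
  rw [this, Finset.card_singleton]

lemma chiTilde_eq (hdim : ∀ F ∈ Δ, F.card ≤ d) :
    (chiTilde Δ : ℚ) = - ∑ i ∈ Finset.range (d+1), (-1:ℚ)^i * (fnum Δ i : ℚ) := by
  have : (chiTilde Δ : ℚ) = ∑ G ∈ Δ, (-1:ℚ)^(G.card + 1) := by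
    rw [chiTilde]; push_cast; ring
  rw [this, sum_card_group Δ d hdim (fun j => (-1:ℚ)^(j+1)), ← Finset.sum_neg_distrib]
  exact Finset.sum_congr rfl fun i _ => by ring

lemma fintsum_eq (hΔ : IsSimplicialComplex Δ) (hdim : ∀ F ∈ Δ, F.card ≤ d)
    (hrec : IsReciprocal Δ d) (y : ℚ) :
    ∑ i ∈ Finset.range (d+1), (-1:ℚ)^i * (fint Δ d i : ℚ) * y^i
      = (-1)^d * ((∑ i ∈ Finset.range (d+1), (-1:ℚ)^i * (fnum Δ i : ℚ) * (1-y)^i)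
          - ∑ i ∈ Finset.range (d+1), (-1:ℚ)^i * (fnum Δ i : ℚ)) := by
  rw [Finset.sum_range_succ', fint_zero Δ d]
  have hstep : ∀ i ∈ Finset.range d, (-1:ℚ)^(i+1) * (fint Δ d (i+1) : ℚ) * y^(i+1)
      = ∑ G ∈ Δ, ((-1:ℚ)^(i+1) * ((-1)^(d-G.card) * (G.card.choose (i+1))) * y^(i+1)) := by
    intro i _
    have h := fint_eq Δ d hΔ hrec (i+1) (by omega)
    have hq : (fint Δ d (i+1) : ℚ) = ∑ G ∈ Δ, (-1:ℚ)^(d-G.card) * (G.card.choose (i+1)) := by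
      exact_mod_cast congrArg (fun z : ℤ => (z : ℚ)) h
    rw [hq, Finset.mul_sum, Finset.sum_mul]

  rw [Finset.sum_congr rfl hstep, Finset.sum_comm]
  have hinner : ∀ G ∈ Δ, ∑ i ∈ Finset.range d,
      ((-1:ℚ)^(i+1) * ((-1)^(d-G.card) * (G.card.choose (i+1))) * y^(i+1))
      = (-1:ℚ)^d * ((-1)^G.card * (1-y)^G.card - (-1)^G.card) := by
    intro G hG
    have hj := hdim G hG
    have hb := binom_q d G.card hj y
    have hsplit : ∑ i ∈ Finset.range (d+1), (G.card.choose i : ℚ) * (-y)^i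
        = ∑ i ∈ Finset.range d, (G.card.choose (i+1) : ℚ) * (-y)^(i+1) + 1 := by
      rw [Finset.sum_range_succ']; simp
    have h2 : ∑ i ∈ Finset.range d, (G.card.choose (i+1) : ℚ) * (-y)^(i+1)
        = (1-y)^G.card - 1 := by rw [← hb, hsplit]; ring
    calc ∑ i ∈ Finset.range d,
          ((-1:ℚ)^(i+1) * ((-1)^(d-G.card) * (G.card.choose (i+1))) * y^(i+1))
        = (-1:ℚ)^(d-G.card) * ∑ i ∈ Finset.range d, (G.card.choose (i+1) : ℚ) * (-y)^(i+1) := by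
          rw [Finset.mul_sum]
          exact Finset.sum_congr rfl fun i _ => by rw [neg_pow]; ring
      _ = (-1:ℚ)^(d-G.card) * ((1-y)^G.card - 1) := by rw [h2]
      _ = (-1:ℚ)^d * ((-1)^G.card * (1-y)^G.card - (-1)^G.card) := by
          rw [neg_one_pow_sub_q d G.card hj]; ring
  rw [Finset.sum_congr rfl hinner,
      sum_card_group Δ d hdim (fun j => (-1:ℚ)^d * ((-1)^j * (1-y)^j - (-1)^j))]
  rw [mul_sub, Finset.mul_sum, Finset.mul_sum, ← Finset.sum_sub_distrib]
  simp only [pow_zero, Nat.cast_zero, mul_zero, zero_mul, one_mul, add_zero, mul_one]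
  exact Finset.sum_congr rfl fun i _ => by ring

end Aux

lemma macdonald_key {V : Type*} [DecidableEq V] (Δ : Finset (Finset V)) (d : ℕ)
    (hΔ : IsSimplicialComplex Δ) (hdim : ∀ F ∈ Δ, F.card ≤ d)
    (hrec : IsReciprocal Δ d) (x : ℚ) :
    (-1:ℚ)^d * ((∑ i ∈ Finset.range (d+1), (-1:ℚ)^i * (fnum Δ i : ℚ) * (-x)^i)
        - 1/2 * ∑ i ∈ Finset.range (d+1), (-1:ℚ)^i * fpartial Δ d i * (-x)^i)
      = ((∑ i ∈ Finset.range (d+1), (-1:ℚ)^i * (fnum Δ i : ℚ) * (1+x)^i)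
        - 1/2 * ∑ i ∈ Finset.range (d+1), (-1:ℚ)^i * fpartial Δ d i * (1+x)^i)
        + (if Even d then 0 else (chiTilde Δ : ℚ)) := by
  have hA1 : ∀ y : ℚ, ∑ i ∈ Finset.range (d+1), (-1:ℚ)^i * (fnum Δ i : ℚ) * y^i
      = ∑ i ∈ Finset.range (d+1), (-1:ℚ)^i * (fnum Δ i : ℚ) * y^i := fun _ => rfl
  have hP : ∀ y : ℚ, ∑ i ∈ Finset.range (d+1), (-1:ℚ)^i * fpartial Δ d i * y^i
      = (∑ i ∈ Finset.range (d+1), (-1:ℚ)^i * (fnum Δ i : ℚ) * y^i)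
        - (-1:ℚ)^d * ((∑ i ∈ Finset.range (d+1), (-1:ℚ)^i * (fnum Δ i : ℚ) * (1-y)^i)
          - ∑ i ∈ Finset.range (d+1), (-1:ℚ)^i * (fnum Δ i : ℚ)) := by
    intro y
    rw [← fintsum_eq Δ d hΔ hdim hrec y, ← Finset.sum_sub_distrib]
    refine Finset.sum_congr rfl fun i hi => ?_
    rcases Nat.eq_zero_or_pos i with rfl | hipos
    · rw [fpartial, if_pos rfl, fnum_zero Δ hΔ.1, fint_zero Δ d]
      push_cast; ring
    · rw [fpartial, if_neg (by omega)]; ring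
  rw [hP, hP, show (1:ℚ) - (1+x) = -x by ring, show (1:ℚ) - (-x) = 1+x by ring,
      chiTilde_eq Δ d hdim]
  rcases Nat.even_or_odd d with h | h
  · rw [if_pos h, Even.neg_one_pow h]; ring
  · rw [if_neg (by simpa using h), Odd.neg_one_pow h]; ring

/-- Macdonald's polynomial relation, derived from the Dehn–Sommerville relation:
`(−1)^d Q(−x) = Q(1+x) + c` with `c = 0` for `d` even and `c = χ̃(Δ)` for `d` odd. -/
theorem macdonald_relation {V : Type*} [DecidableEq V] (Δ : Finset (Finset V)) (d : ℕ)
    (hd : 1 ≤ d) (hΔ : IsSimplicialComplex Δ) (hdim : HasDimension Δ d)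
    (hrec : IsReciprocal Δ d) :
    C ((-1 : ℚ) ^ d) * (Qpoly Δ d).comp (-X)
      = (Qpoly Δ d).comp (1 + X) + C (if Even d then 0 else (chiTilde Δ : ℚ)) := by
  apply Polynomial.funext
  intro x
  have key := macdonald_key Δ d hΔ hdim.1 hrec x
  simp only [Qpoly, eval_mul, eval_C, eval_comp, eval_add, eval_sub, eval_neg, eval_X,
    eval_one, eval_finset_sum, eval_pow]
  exact key
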